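/- Let G be an α-star-constellation graph (α ∈ ℕ₀) and let v be a swap-equilibrium for a Schelling game on G. Then for every set S of at most α edges of G, v remains a swap-equilibrium on G − S (v is α-edge-robust). -/

import Mathlib

open SimpleGraph

variable {V : Type*}

/-- Utility of the agent occupying vertex `v` in graph `H` under type assignment `τ`:
the fraction of same-type agents among occupied neighbors (0 if no neighbors). -/
noncomputable def utility (H : SimpleGraph V) (τ : V → Bool) (v : V) : ℚ := by
  classical
  exact if H.neighborSet v = ∅ then 0
    else ((H.neighborSet v ∩ {w | τ w = τ v}).ncard : ℚ) / ((H.neighborSet v).ncard : ℚ)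

/-- The type function after the agents on vertices `i` and `j` exchange their vertices. -/
noncomputable def swapAt (τ : V → Bool) (i j : V) : V → Bool := fun v => by
  classical
  exact if v = i then τ j else if v = j then τ i else τ v

/-- The swap of the (distinct-type) agents on `i` and `j` strictly increases both utilities. -/
def ProfitableSwap (H : SimpleGraph V) (τ : V → Bool) (i j : V) : Prop :=
  τ i ≠ τ j ∧
  utility H τ i < utility H (swapAt τ i j) j ∧
  utility H τ j < utility H (swapAt τ i j) i

/-- Swap-equilibrium: no profitable swap exists. -/
def IsSwapEq (H : SimpleGraph V) (τ : V → Bool) : Prop :=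
  ∀ i j : V, ¬ ProfitableSwap H τ i j

/-- Degree of a vertex (number of neighbors). -/
noncomputable def ndeg (H : SimpleGraph V) (v : V) : ℕ := (H.neighborSet v).ncard

/-- `G` is an `α`-star-constellation graph: connected, and every vertex of degree `> 1`
has at least `α` more degree-one neighbors than neighbors of degree `> 1`. -/
def IsStarConstellation (G : SimpleGraph V) (α : ℕ) : Prop :=
  G.Connected ∧ ∀ v : V, 1 < ndeg G v →
    {w ∈ G.neighborSet v | 1 < ndeg G w}.ncard + α ≤
      {w ∈ G.neighborSet v | ndeg G w = 1}.ncard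

/-!
If some leaf `u` is unhappy, i.e. its only neighbour `c` has the other type, then in an
equilibrium of `G` no vertex `x ≠ c` of the type of `c` has a neighbour of the other type:
`u` and `x` would both gain by swapping. A profitable swap in `G − S` needs both endpoints to
have a neighbour of the other type, and one endpoint has the type of `c`, which rules it out.

If every leaf is happy, a vertex with a neighbour of the other type has degree `> 1`, all its
leaf neighbours share its type and all its other-type neighbours are non-leaves; so by the
constellation condition it has at least `α` more same-type than other-type neighbours. Deleting
at most `α` edges keeps its utility `≥ 1/2`, and two agents of utility `≥ 1/2` cannot both
gain by a swap.
-/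

lemma swapAt_left (τ : V → Bool) (i j : V) : swapAt τ i j i = τ j := by simp [swapAt]

lemma swapAt_right (τ : V → Bool) (i j : V) : swapAt τ i j j = τ i := by
  by_cases h : j = i <;> simp [swapAt, h]

lemma swapAt_of_ne {τ : V → Bool} {i j v : V} (hi : v ≠ i) (hj : v ≠ j) :
    swapAt τ i j v = τ v := by
  simp [swapAt, hi, hj]

lemma swapAt_comm (τ : V → Bool) (i j : V) : swapAt τ i j = swapAt τ j i := by
  funext v; unfold swapAt; split_ifs <;> simp_all

section Utility

variable {H : SimpleGraph V} {τ : V → Bool} {v w c : V}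

lemma utility_of_nonempty (h : (H.neighborSet v).Nonempty) :
    utility H τ v
      = ((H.neighborSet v ∩ {w | τ w = τ v}).ncard : ℚ) / ((H.neighborSet v).ncard : ℚ) := by
  simp [utility, h.ne_empty]

lemma utility_of_neighborSet_eq_singleton (h : H.neighborSet v = {c}) :
    utility H τ v = if τ c = τ v then 1 else 0 := by
  rw [utility_of_nonempty (h ▸ Set.singleton_nonempty c), h]
  split_ifs with hc
  · rw [Set.inter_eq_left.mpr (Set.singleton_subset_iff.mpr (show c ∈ {w | τ w = τ v} from hc)),
      div_self (by simp)]
  · simp [Set.singleton_inter_eq_empty.mpr (show c ∉ {w | τ w = τ v} from hc)]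

lemma exists_mem_neighborSet_of_utility_pos (h : 0 < utility H τ v) :
    ∃ w ∈ H.neighborSet v, τ w = τ v := by
  by_contra! hc
  have hempty : H.neighborSet v ∩ {w | τ w = τ v} = ∅ :=
    Set.eq_empty_of_forall_notMem fun w hw => hc w hw.1 hw.2
  unfold utility at h
  split_ifs at h <;> simp_all

lemma utility_nonneg (H : SimpleGraph V) (τ : V → Bool) (v : V) : 0 ≤ utility H τ v := by
  unfold utility; split_ifs <;> positivity

variable [Finite V]

lemma utility_pos_of_mem (hw : w ∈ H.neighborSet v) (hτ : τ w = τ v) : 0 < utility H τ v := by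
  rw [utility_of_nonempty ⟨w, hw⟩]
  have hsame : 0 < (H.neighborSet v ∩ {w | τ w = τ v}).ncard :=
    (Set.ncard_pos (Set.toFinite _)).mpr ⟨w, hw, hτ⟩
  have hall : 0 < (H.neighborSet v).ncard := (Set.ncard_pos (Set.toFinite _)).mpr ⟨w, hw⟩
  positivity

lemma utility_lt_one_of_mem (hw : w ∈ H.neighborSet v) (hτ : τ w ≠ τ v) : utility H τ v < 1 := by
  rw [utility_of_nonempty ⟨w, hw⟩]
  have hall : 0 < (H.neighborSet v).ncard := (Set.ncard_pos (Set.toFinite _)).mpr ⟨w, hw⟩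
  rw [div_lt_one (by exact_mod_cast hall)]
  have hssub : H.neighborSet v ∩ {w | τ w = τ v} ⊂ H.neighborSet v :=
    ⟨Set.inter_subset_left, fun hsub => hτ (hsub hw).2⟩
  exact_mod_cast Set.ncard_lt_ncard hssub (Set.toFinite _)

lemma half_le_utility (hne : (H.neighborSet v).Nonempty)
    (h : (H.neighborSet v \ {w | τ w = τ v}).ncard ≤ (H.neighborSet v ∩ {w | τ w = τ v}).ncard) :
    1 / 2 ≤ utility H τ v := by
  rw [utility_of_nonempty hne]
  have hall : 0 < (H.neighborSet v).ncard := (Set.ncard_pos (Set.toFinite _)).mpr hne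
  have hsplit := Set.ncard_inter_add_ncard_sdiff_eq_ncard (H.neighborSet v) {w | τ w = τ v}
  rw [div_le_div_iff₀ (by norm_num) (by exact_mod_cast hall), one_mul]
  have hhalf : (H.neighborSet v).ncard ≤ (H.neighborSet v ∩ {w | τ w = τ v}).ncard * 2 := by omega
  exact_mod_cast hhalf

/-- After the swap, `j` carries the type of `i`, so the neighbours of `j` agreeing with it and
those that agreed with it before the swap are disjoint. -/
lemma utility_add_utility_swapAt_le_one (H : SimpleGraph V) {i j : V} (hij : τ i ≠ τ j) :
    utility H τ j + utility H (swapAt τ i j) j ≤ 1 := by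
  rcases (H.neighborSet j).eq_empty_or_nonempty with hempty | hne
  · simp [utility, hempty]
  rw [utility_of_nonempty hne, utility_of_nonempty hne, ← add_div,
    div_le_one (by exact_mod_cast (Set.ncard_pos (Set.toFinite _)).mpr hne), swapAt_right]
  have hdisj : Disjoint (H.neighborSet j ∩ {w | τ w = τ j})
      (H.neighborSet j ∩ {w | swapAt τ i j w = τ i}) := by
    rw [Set.disjoint_left]
    rintro w ⟨hw, hwj⟩ ⟨-, hwi⟩
    simp only [Set.mem_ofPred_eq] at hwj hwi
    rcases eq_or_ne w i with rfl | hwi'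
    · exact hij (hwi.symm.trans (swapAt_left τ w j))
    · rw [swapAt_of_ne hwi' (H.ne_of_adj hw).symm] at hwi
      exact hij (hwi.symm.trans hwj)
  rw [← Nat.cast_add, ← Set.ncard_union_eq hdisj]
  exact_mod_cast Set.ncard_le_ncard (Set.union_subset Set.inter_subset_left Set.inter_subset_left)

lemma ncard_neighborSet_inter_le_deleteEdges (G : SimpleGraph V) (S : Set (Sym2 V)) (T : Set V)
    (v : V) :
    (G.neighborSet v ∩ T).ncard ≤ ((G.deleteEdges S).neighborSet v ∩ T).ncard + S.ncard := by
  have hcover : G.neighborSet v ∩ T ⊆ ((G.deleteEdges S).neighborSet v ∩ T) ∪ {w | s(v, w) ∈ S} :=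
    fun w ⟨hw, hT⟩ => by
      by_cases hS : s(v, w) ∈ S
      · exact Or.inr hS
      · exact Or.inl ⟨G.deleteEdges_adj.mpr ⟨hw, hS⟩, hT⟩
  have hdeleted : {w | s(v, w) ∈ S}.ncard ≤ S.ncard :=
    Set.ncard_le_ncard_of_injOn (fun w => s(v, w)) (fun _ hw => hw)
      (fun _ _ _ _ h => Sym2.congr_right.mp h)
  exact (Set.ncard_le_ncard hcover).trans ((Set.ncard_union_le _ _).trans (by omega))

end Utility

lemma neighborSet_eq_singleton_of_ndeg_eq_one {G : SimpleGraph V} {u c : V} (hu : ndeg G u = 1)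
    (huc : G.Adj u c) : G.neighborSet u = {c} := by
  obtain ⟨a, ha⟩ := Set.ncard_eq_one.mp hu
  rw [ha, Set.mem_singleton_iff.mp (ha ▸ huc : c ∈ ({a} : Set V))]

section Game

variable {G H : SimpleGraph V} {τ : V → Bool} {i j : V}

lemma ProfitableSwap.symm (h : ProfitableSwap H τ i j) : ProfitableSwap H τ j i := by
  obtain ⟨hij, hi, hj⟩ := h
  exact ⟨Ne.symm hij, swapAt_comm τ i j ▸ hj, swapAt_comm τ i j ▸ hi⟩

lemma ProfitableSwap.exists_neighbor (h : ProfitableSwap H τ i j) :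
    ∃ y ∈ H.neighborSet j, y ≠ i ∧ τ y = τ i := by
  obtain ⟨y, hy, hyτ⟩ :=
    exists_mem_neighborSet_of_utility_pos ((utility_nonneg H τ i).trans_lt h.2.1)
  rw [swapAt_right] at hyτ
  have hyi : y ≠ i := by
    rintro rfl
    exact h.1 (hyτ ▸ swapAt_left τ y j)
  exact ⟨y, hy, hyi, (swapAt_of_ne hyi (H.ne_of_adj hy).symm).symm.trans hyτ⟩

variable [Finite V]

/-- `u` gets utility `0` and would move next to `y`; `x` has utility `< 1` and would move next
to `c`, its type. -/
lemma IsSwapEq.eq_of_adj_of_unhappy_leaf (heq : IsSwapEq G τ) {u c x y : V}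
    (hu : ndeg G u = 1) (huc : G.Adj u c) (hcu : τ c ≠ τ u) (hx : τ x = τ c) (hxc : x ≠ c)
    (hxy : G.Adj x y) : τ y = τ x := by
  by_contra hyx
  have hNu := neighborSet_eq_singleton_of_ndeg_eq_one hu huc
  have hyu : y ≠ u := by
    rintro rfl
    have hxN : x ∈ G.neighborSet y := hxy.symm
    exact hxc (by simpa [hNu] using hxN)
  have hτy : τ y = τ u :=
    (Bool.eq_not_of_ne hyx).trans (hx ▸ (Bool.eq_not_of_ne hcu.symm).symm)
  refine heq u x ⟨fun h => hcu (hx ▸ h.symm), ?_, ?_⟩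
  · rw [utility_of_neighborSet_eq_singleton hNu, if_neg hcu]
    exact utility_pos_of_mem hxy (by rw [swapAt_of_ne hyu hxy.ne', swapAt_right, hτy])
  · rw [utility_of_neighborSet_eq_singleton hNu, swapAt_left, swapAt_of_ne huc.ne' hxc.symm,
      if_pos hx.symm]
    exact utility_lt_one_of_mem hxy hyx

lemma IsSwapEq.not_profitableSwap_of_unhappy_leaf (heq : IsSwapEq G τ) (hHG : H ≤ G)
    {u c : V} (hu : ndeg G u = 1) (huc : G.Adj u c) (hcu : τ c ≠ τ u) (hi : τ i = τ c) :
    ¬ ProfitableSwap H τ i j := by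
  intro hswap
  obtain ⟨x, hx, -, hxτ⟩ := hswap.symm.exists_neighbor
  obtain ⟨y, hy, hyi, hyτ⟩ := hswap.exists_neighbor
  rcases eq_or_ne i c with rfl | hic
  · have hjy := heq.eq_of_adj_of_unhappy_leaf hu huc hcu hyτ hyi (hHG hy).symm
    exact hswap.1 (hyτ.symm.trans hjy.symm)
  · exact hswap.1 ((heq.eq_of_adj_of_unhappy_leaf hu huc hcu hi hic (hHG hx)).symm.trans hxτ)

end Game

section StarConstellation

variable {G : SimpleGraph V} {α : ℕ} {τ : V → Bool} [Finite V]

lemma one_lt_ndeg_of_adj_of_ne {v w : V} (hvw : G.Adj v w) (hne : ndeg G v ≠ 1) :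
    1 < ndeg G v := by
  have : 0 < ndeg G v := (Set.ncard_pos (Set.toFinite _)).mpr ⟨w, hvw⟩
  omega

lemma IsStarConstellation.ncard_diff_add_le_ncard_inter (hG : IsStarConstellation G α)
    (hleaves : ∀ u c, ndeg G u = 1 → G.Adj u c → τ c = τ u) {i : V} (hi : 1 < ndeg G i) :
    (G.neighborSet i \ {w | τ w = τ i}).ncard + α ≤ (G.neighborSet i ∩ {w | τ w = τ i}).ncard := by
  have hother : G.neighborSet i \ {w | τ w = τ i} ⊆ {w ∈ G.neighborSet i | 1 < ndeg G w} :=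
    fun w ⟨hw, hwτ⟩ => ⟨hw, one_lt_ndeg_of_adj_of_ne (G.adj_symm hw)
      fun hw1 => hwτ (hleaves w i hw1 (G.adj_symm hw)).symm⟩
  have hleaf : {w ∈ G.neighborSet i | ndeg G w = 1} ⊆ G.neighborSet i ∩ {w | τ w = τ i} :=
    fun w ⟨hw, hw1⟩ => ⟨hw, (hleaves w i hw1 (G.adj_symm hw)).symm⟩
  have := hG.2 i hi
  have := Set.ncard_le_ncard hother
  have := Set.ncard_le_ncard hleaf
  omega

lemma IsStarConstellation.half_le_utility_deleteEdges (hG : IsStarConstellation G α)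
    (hleaves : ∀ u c, ndeg G u = 1 → G.Adj u c → τ c = τ u) {S : Set (Sym2 V)}
    (hS : S.ncard ≤ α) {i x : V} (hx : x ∈ (G.deleteEdges S).neighborSet i) (hxi : τ x ≠ τ i) :
    1 / 2 ≤ utility (G.deleteEdges S) τ i := by
  have hxG : G.Adj i x := G.deleteEdges_le S hx
  have hi : 1 < ndeg G i := one_lt_ndeg_of_adj_of_ne hxG fun hi1 => hxi (hleaves i x hi1 hxG)
  have hG_bound := hG.ncard_diff_add_le_ncard_inter hleaves hi
  have hdeleted := ncard_neighborSet_inter_le_deleteEdges G S {w | τ w = τ i} i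
  have hother : ((G.deleteEdges S).neighborSet i \ {w | τ w = τ i}).ncard
      ≤ (G.neighborSet i \ {w | τ w = τ i}).ncard :=
    Set.ncard_le_ncard (Set.sdiff_subset_sdiff_left fun w hw => G.deleteEdges_le S hw)
  exact half_le_utility ⟨x, hx⟩ (by omega)

end StarConstellation

/-- On an `α`-star-constellation graph, every swap-equilibrium is `α`-edge-robust: it
remains a swap-equilibrium after deleting any set of at most `α` edges. -/
theorem starConstellation_alpha_edge_robust [Fintype V] (G : SimpleGraph V) (α : ℕ)
    (τ : V → Bool) (hG : IsStarConstellation G α) (heq : IsSwapEq G τ) :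
    ∀ S : Set (Sym2 V), S ⊆ G.edgeSet → S.ncard ≤ α →
      IsSwapEq (G.deleteEdges S) τ := by
  intro S _ hS i j hswap
  by_cases hleaves : ∀ u c, ndeg G u = 1 → G.Adj u c → τ c = τ u
  · obtain ⟨x, hx, -, hxτ⟩ := hswap.symm.exists_neighbor
    obtain ⟨y, hy, -, hyτ⟩ := hswap.exists_neighbor
    have hi := hG.half_le_utility_deleteEdges hleaves hS hx (hxτ ▸ hswap.1.symm)
    have hj := hG.half_le_utility_deleteEdges hleaves hS hy (hyτ ▸ hswap.1)
    have := utility_add_utility_swapAt_le_one (G.deleteEdges S) hswap.1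
    linarith [hswap.2.1]
  · push Not at hleaves
    obtain ⟨u, c, hu, huc, hcu⟩ := hleaves
    have hle := G.deleteEdges_le S
    by_cases hi : τ i = τ c
    · exact heq.not_profitableSwap_of_unhappy_leaf hle hu huc hcu hi hswap
    · have hj : τ j = τ c := by
        rw [Bool.eq_not_of_ne hswap.1.symm, Bool.eq_not_of_ne hi, Bool.not_not]
      exact heq.not_profitableSwap_of_unhappy_leaf hle hu huc hcu hj hswap.symm
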